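/- arXiv:2605.20482 — 3 statements merged into one kernel-verified Lean document; each statement's English description precedes it below -/
import Mathlib

section
/- Let ξ ∈ ℝ^k, y ∈ ℝ^{n_y}, and let E_y be an (n_y+1)×k real matrix such that E_y ξ = [y; 1] (the vector y with the scalar 1 appended). Let M_x and M_σ be symmetric k×k matrices satisfying ξᵀ M_x ξ ≥ 0 and ξᵀ M_σ ξ ≥ 0, and let a ∈ ℝ^{n_y}, b ∈ ℝ. If the matrix M_x + M_σ + E_yᵀ S(a, b) E_y is negative semidefinite, then aᵀ y ≤ b. (This is the core S-procedure step underlying the QC-based reachability and safety semidefinite programs: feasibility of the linear matrix inequality certifies that the output y lies in the halfspace {y : aᵀy ≤ b}.) -/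
open Matrix

/-- The halfspace-encoding matrix `S(a,b) = [[0, a], [aᵀ, −2b]]`. -/
def halfspaceMatrix (n : ℕ) (a : Fin n → ℝ) (b : ℝ) :
    Matrix (Fin n ⊕ Fin 1) (Fin n ⊕ Fin 1) ℝ :=
  Matrix.fromBlocks 0 (fun i _ => a i) (fun _ j => a j) (fun _ _ => -2 * b)

/-- S-procedure step. If `ξᵀ M_x ξ ≥ 0`, `ξᵀ M_σ ξ ≥ 0`, and
`M_x + M_σ + E_yᵀ S(a,b) E_y ⪯ 0`, where `E_y ξ = [y; 1]`, then `aᵀ y ≤ b`. -/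
theorem s_procedure_halfspace
    (k ny : ℕ) (ξ : Fin k → ℝ) (y : Fin ny → ℝ)
    (Ey : Matrix (Fin ny ⊕ Fin 1) (Fin k) ℝ)
    (hEy : Ey.mulVec ξ = Sum.elim y (fun _ => (1 : ℝ)))
    (Mx Mσ : Matrix (Fin k) (Fin k) ℝ)
    (hMxsymm : Mx.IsSymm) (hMσsymm : Mσ.IsSymm)
    (hMx : 0 ≤ ξ ⬝ᵥ Mx.mulVec ξ) (hMσ : 0 ≤ ξ ⬝ᵥ Mσ.mulVec ξ)
    (a : Fin ny → ℝ) (b : ℝ)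
    (hLMI : ∀ v : Fin k → ℝ,
      v ⬝ᵥ (Mx + Mσ + Eyᵀ * halfspaceMatrix ny a b * Ey).mulVec v ≤ 0) :
    a ⬝ᵥ y ≤ b := by
  have key : ξ ⬝ᵥ (Eyᵀ * halfspaceMatrix ny a b * Ey) *ᵥ ξ = 2 * (a ⬝ᵥ y) - 2 * b := by
    have h1 : (Eyᵀ * halfspaceMatrix ny a b * Ey) *ᵥ ξ
        = Eyᵀ *ᵥ (halfspaceMatrix ny a b *ᵥ (Ey *ᵥ ξ)) := by
      rw [mulVec_mulVec, mulVec_mulVec]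
    rw [h1, dotProduct_mulVec, vecMul_transpose, hEy, halfspaceMatrix]
    erw [fromBlocks_mulVec]
    show (y ⊕ᵥ fun _ => (1:ℝ)) ⬝ᵥ (_ ⊕ᵥ _) = _
    rw [sumElim_dotProduct_sumElim]
    simp [mulVec, dotProduct, Fin.sum_univ_one, mul_comm]
    ring
  have h := hLMI ξ
  rw [add_mulVec, add_mulVec, dotProduct_add, dotProduct_add, key] at h
  linarith
end

section
/- Let n ∈ ℕ, let u, v ∈ ℝⁿ with v_i = max(0, u_i) for every i, let Q₁ be a diagonal real n×n matrix, and let Q₂ be a symmetric real 2n×2n matrix that is copositive, i.e., wᵀ Q₂ w ≥ 0 for every w ∈ ℝ^{2n} with all components nonnegative. Define z := [u; v] ∈ ℝ^{2n}, M₁ := [[0, Q₁], [Q₁, −2Q₁]], and T := [[−Iₙ, Iₙ], [0, Iₙ]]. Then zᵀ (M₁ + Tᵀ Q₂ T) z ≥ 0. -/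
open Matrix

/-- Repeated-ReLU quadratic constraint. If `v = ReLU(u)`
componentwise, `Q₁` is diagonal, and `Q₂` is symmetric copositive, then
`zᵀ (M₁ + Tᵀ Q₂ T) z ≥ 0` for `z = [u; v]`, where
`M₁ = [[0, Q₁], [Q₁, −2Q₁]]` and `T = [[−Iₙ, Iₙ], [0, Iₙ]]`. -/
theorem repeated_relu_qc
    (n : ℕ) (u v : Fin n → ℝ) (hrelu : ∀ i : Fin n, v i = max 0 (u i))
    (Q₁ : Matrix (Fin n) (Fin n) ℝ) (hQ₁ : Q₁.IsDiag)
    (Q₂ : Matrix (Fin n ⊕ Fin n) (Fin n ⊕ Fin n) ℝ) (hQ₂symm : Q₂.IsSymm)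
    (hQ₂copos : ∀ w : Fin n ⊕ Fin n → ℝ, (∀ i, 0 ≤ w i) → 0 ≤ w ⬝ᵥ Q₂.mulVec w) :
    0 ≤ (Sum.elim u v) ⬝ᵥ
        ((Matrix.fromBlocks 0 Q₁ Q₁ (-(2 : ℝ) • Q₁) +
          (Matrix.fromBlocks (-1 : Matrix (Fin n) (Fin n) ℝ) 1 0 1)ᵀ * Q₂ *
            Matrix.fromBlocks (-1 : Matrix (Fin n) (Fin n) ℝ) 1 0 1).mulVec
          (Sum.elim u v)) := by
  set z : Fin n ⊕ Fin n → ℝ := Sum.elim u v with hz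
  set T : Matrix (Fin n ⊕ Fin n) (Fin n ⊕ Fin n) ℝ :=
    Matrix.fromBlocks (-1) 1 0 1 with hT
  have hkey : ∀ i, v i * (u i - v i) = 0 := by
    intro i
    rcases le_or_gt (u i) 0 with h | h
    · simp [hrelu i, max_eq_left h]
    · simp [hrelu i, max_eq_right h.le]
  have hdiag : ∀ w : Fin n → ℝ, Q₁.mulVec w = fun i => Q₁ i i * w i := by
    intro w
    funext i
    simp only [Matrix.mulVec, dotProduct]
    rw [Finset.sum_eq_single i]
    · intro j _ hj
      rw [hQ₁ (Ne.symm hj), zero_mul]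
    · intro h; exact absurd (Finset.mem_univ i) h
  have h1 : z ⬝ᵥ (Matrix.fromBlocks 0 Q₁ Q₁ (-(2 : ℝ) • Q₁)).mulVec z = 0 := by
    rw [hz, Matrix.fromBlocks_mulVec]
    simp only [Sum.elim_comp_inl, Sum.elim_comp_inr, Matrix.zero_mulVec, zero_add,
      Matrix.smul_mulVec, sumElim_dotProduct_sumElim, hdiag]
    simp only [dotProduct, Pi.add_apply, Pi.smul_apply, smul_eq_mul]
    rw [← Finset.sum_add_distrib]
    apply Finset.sum_eq_zero
    intro i _
    linear_combination 2 * Q₁ i i * hkey i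
  have hTz : T.mulVec z = Sum.elim (-u + v) v := by
    rw [hz, hT, Matrix.fromBlocks_mulVec]
    simp only [Sum.elim_comp_inl, Sum.elim_comp_inr, Matrix.neg_mulVec, Matrix.one_mulVec,
      Matrix.zero_mulVec, zero_add]
  have h2 : 0 ≤ z ⬝ᵥ (Tᵀ * Q₂ * T).mulVec z := by
    have : (Tᵀ * Q₂ * T).mulVec z = Tᵀ.mulVec (Q₂.mulVec (T.mulVec z)) := by
      rw [← Matrix.mulVec_mulVec, ← Matrix.mulVec_mulVec]
    rw [this, Matrix.dotProduct_mulVec, Matrix.vecMul_transpose, hTz]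
    apply hQ₂copos
    intro i
    cases i with
    | inl i =>
        simp only [Sum.elim_inl, Pi.add_apply, Pi.neg_apply]
        have : u i ≤ v i := by rw [hrelu i]; exact le_max_right _ _
        linarith
    | inr i =>
        simp only [Sum.elim_inr]
        rw [hrelu i]; exact le_max_left _ _
  rw [Matrix.add_mulVec, dotProduct_add, h1, zero_add]
  exact h2
end

section
/- Let n ∈ ℕ, let u, v ∈ ℝⁿ with v_i = max(0, u_i) for every i, let Q₁ be a diagonal real n×n matrix, and let Q₂, N₂ be symmetric real 2n×2n matrices such that every entry of N₂ is nonnegative and Q₂ − N₂ is positive semidefinite. Define z := [u; v] ∈ ℝ^{2n}, M₁ := [[0, Q₁], [Q₁, −2Q₁]], and T := [[−Iₙ, Iₙ], [0, Iₙ]]. Then zᵀ (M₁ + Tᵀ Q₂ T) z ≥ 0. That is, the relaxed copositivity conditions Q₂ − N₂ ⪰ 0 and N₂ ≥ 0 (elementwise) suffice for the validity of the blockwise repeated-ReLU quadratic constraint. -/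
open Matrix

lemma dot_mulVec_nonneg_aux {m : Type*} [Fintype m] (N : Matrix m m ℝ)
    (hN : ∀ i j, 0 ≤ N i j) (w : m → ℝ) (hw : ∀ i, 0 ≤ w i) :
    0 ≤ w ⬝ᵥ N.mulVec w := by
  unfold dotProduct mulVec
  apply Finset.sum_nonneg
  intro i _
  apply mul_nonneg (hw i)
  apply Finset.sum_nonneg
  intro j _
  exact mul_nonneg (hN i j) (hw j)

lemma diag_dot_aux {n : ℕ} (Q : Matrix (Fin n) (Fin n) ℝ) (hQ : Q.IsDiag)
    (x y : Fin n → ℝ) : x ⬝ᵥ Q.mulVec y = ∑ i, Q i i * x i * y i := by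
  unfold dotProduct
  apply Finset.sum_congr rfl
  intro i _
  show x i * (∑ j, Q i j * y j) = Q i i * x i * y i
  rw [Finset.mul_sum]
  rw [Finset.sum_eq_single i]
  · ring
  · intro j _ hj
    rw [hQ (Ne.symm hj)]
    ring
  · simp

/-- The relaxed copositivity conditions `Q₂ − N₂ ⪰ 0` and
`N₂ ≥ 0` (elementwise) suffice for validity of the blockwise repeated-ReLU
quadratic constraint `zᵀ (M₁ + Tᵀ Q₂ T) z ≥ 0` with `z = [u; v]`,
`v = ReLU(u)`, `M₁ = [[0, Q₁], [Q₁, −2Q₁]]`, `T = [[−Iₙ, Iₙ], [0, Iₙ]]`. -/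
theorem repeated_relu_qc_relaxed_copositivity
    (n : ℕ) (u v : Fin n → ℝ) (hrelu : ∀ i : Fin n, v i = max 0 (u i))
    (Q₁ : Matrix (Fin n) (Fin n) ℝ) (hQ₁ : Q₁.IsDiag)
    (Q₂ N₂ : Matrix (Fin n ⊕ Fin n) (Fin n ⊕ Fin n) ℝ)
    (hQ₂symm : Q₂.IsSymm) (hN₂symm : N₂.IsSymm)
    (hN₂nonneg : ∀ i j, 0 ≤ N₂ i j)
    (hPSD : ∀ w : Fin n ⊕ Fin n → ℝ, 0 ≤ w ⬝ᵥ (Q₂ - N₂).mulVec w) :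
    0 ≤ (Sum.elim u v) ⬝ᵥ
        ((Matrix.fromBlocks 0 Q₁ Q₁ (-(2 : ℝ) • Q₁) +
          (Matrix.fromBlocks (-1 : Matrix (Fin n) (Fin n) ℝ) 1 0 1)ᵀ * Q₂ *
            Matrix.fromBlocks (-1 : Matrix (Fin n) (Fin n) ℝ) 1 0 1).mulVec
          (Sum.elim u v)) := by
  set T : Matrix (Fin n ⊕ Fin n) (Fin n ⊕ Fin n) ℝ :=
    Matrix.fromBlocks (-1) 1 0 1 with hT
  set z : Fin n ⊕ Fin n → ℝ := Sum.elim u v with hz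
  rw [Matrix.add_mulVec, dotProduct_add]
  have h1 : z ⬝ᵥ (Matrix.fromBlocks 0 Q₁ Q₁ (-(2 : ℝ) • Q₁)).mulVec z = 0 := by
    rw [hz, Matrix.fromBlocks_mulVec, sumElim_dotProduct_sumElim]
    simp only [Matrix.zero_mulVec, zero_add, dotProduct_add, Matrix.smul_mulVec,
      dotProduct_smul, Matrix.add_mulVec]
    simp only [Sum.elim_comp_inl, Sum.elim_comp_inr]
    rw [diag_dot_aux Q₁ hQ₁, diag_dot_aux Q₁ hQ₁, diag_dot_aux Q₁ hQ₁]
    have key : ∀ i : Fin n, Q₁ i i * u i * v i = Q₁ i i * v i * v i := by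
      intro i
      rcases le_total (u i) 0 with h | h
      · have : v i = 0 := by rw [hrelu i]; exact max_eq_left h
        rw [this]; ring
      · have : v i = u i := by rw [hrelu i]; exact max_eq_right h
        rw [this]
    have h2 : ∀ i : Fin n, Q₁ i i * v i * u i = Q₁ i i * v i * v i := by
      intro i
      have := key i; linarith [this]
    rw [Finset.sum_congr rfl (fun i _ => key i), Finset.sum_congr rfl (fun i _ => h2 i)]
    simp only [smul_eq_mul]
    ring
  rw [h1, zero_add]
  have hTz : T.mulVec z = Sum.elim (fun i => v i - u i) v := by
    rw [hT, hz, Matrix.fromBlocks_mulVec]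
    funext i
    cases i with
    | inl i => simp [Matrix.neg_mulVec, sub_eq_neg_add]
    | inr i => simp
  have hmul : z ⬝ᵥ (Tᵀ * Q₂ * T).mulVec z = (T.mulVec z) ⬝ᵥ Q₂.mulVec (T.mulVec z) := by
    rw [← Matrix.mulVec_mulVec, ← Matrix.mulVec_mulVec, Matrix.dotProduct_mulVec,
      Matrix.vecMul_transpose]
  rw [hmul, hTz]
  set w : Fin n ⊕ Fin n → ℝ := Sum.elim (fun i => v i - u i) v with hwdef
  have hwpos : ∀ i, 0 ≤ w i := by
    rintro (i | i)
    · simp only [hwdef, Sum.elim_inl]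
      have : u i ≤ v i := by rw [hrelu i]; exact le_max_right _ _
      linarith
    · simp only [hwdef, Sum.elim_inr, hrelu i]
      exact le_max_left _ _
  have : w ⬝ᵥ Q₂.mulVec w =
      w ⬝ᵥ (Q₂ - N₂).mulVec w + w ⬝ᵥ N₂.mulVec w := by
    rw [← dotProduct_add, ← Matrix.add_mulVec]
    congr 1
    rw [sub_add_cancel]
  rw [this]
  exact add_nonneg (hPSD w) (dot_mulVec_nonneg_aux N₂ hN₂nonneg w hwpos)
end
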